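/- Let F = (V; E, A) be a finite mixed graph containing k edge- and arc-disjoint spanning mixed arborescences F₁,…,F_k with roots r₁,…,r_k such that #{i : r_i = v} ≤ g(v) for all v ∈ V. Then for every subpartition {X₁,…,X_t} of V, e_E({X₁,…,X_t}) + ∑_{j=1}^t d_A^-(X_j) ≥ kt − g̃(∪_{j=1}^t X_j). -/

import Mathlib

open scoped Classical

/-- The in-degree `d_A^-(X)`: the number of arcs of the multiset `A` with head
in `X` and tail outside `X`. -/
def dIn {V : Type*} [DecidableEq V] (A : Multiset (V × V)) (X : Finset V) : ℕ :=
  (A.filter (fun a => a.2 ∈ X ∧ a.1 ∉ X)).card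

/-- `e_E(P)`: the number of undirected edges of the multiset `E` having one
endpoint in some member of the family `P` and the other endpoint outside that
member (i.e. in a different member, or outside the union of `P`). -/
noncomputable def eCross {V : Type*} [DecidableEq V]
    (E : Multiset (Sym2 V)) (P : Finset (Finset V)) : ℕ :=
  (E.filter (fun e => ∃ u v : V, e = s(u, v) ∧ ∃ X ∈ P, u ∈ X ∧ v ∉ X)).card

/-- `B` is a spanning `r`-arborescence on the vertex type `V`: every vertex is
reachable from `r`, no arc enters `r`, and every other vertex has exactly one
entering arc. -/
def IsSpanningArborescence {V : Type*} [DecidableEq V]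
    (r : V) (B : Multiset (V × V)) : Prop :=
  (∀ v : V, Relation.ReflTransGen (fun a b : V => (a, b) ∈ B) r v) ∧
  (∀ p ∈ B, p.2 ≠ r) ∧
  (∀ v : V, v ≠ r → (B.filter (fun p => p.2 = v)).card = 1)

/-- `(E', A')` is a spanning `r`-mixed arborescence: there is an orientation
`O` of the undirected edges `E'` such that `A' + O` is a spanning
`r`-arborescence. -/
def IsSpanningMixedArborescence {V : Type*} [DecidableEq V]
    (r : V) (E' : Multiset (Sym2 V)) (A' : Multiset (V × V)) : Prop :=
  ∃ O : Multiset (V × V),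
    O.map (fun p => s(p.1, p.2)) = E' ∧ IsSpanningArborescence r (A' + O)

/-- `P` is a subpartition of the vertex set: a family of pairwise disjoint
nonempty subsets. -/
def IsSubpartition {V : Type*} [DecidableEq V] (P : Finset (Finset V)) : Prop :=
  (∀ X ∈ P, X.Nonempty) ∧ (P : Set (Finset V)).Pairwise Disjoint

lemma dIn_add {V : Type*} [DecidableEq V] (A B : Multiset (V × V)) (X : Finset V) :
    dIn (A + B) X = dIn A X + dIn B X := by
  simp [dIn, Multiset.filter_add]

lemma dIn_sum {V ι : Type*} [DecidableEq V] (s : Finset ι) (f : ι → Multiset (V × V))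
    (X : Finset V) : dIn (∑ i ∈ s, f i) X = ∑ i ∈ s, dIn (f i) X := by
  induction s using Finset.cons_induction with
  | empty => simp [dIn]
  | cons a s ha ih => rw [Finset.sum_cons, Finset.sum_cons, dIn_add, ih]

lemma dIn_mono {V : Type*} [DecidableEq V] {A B : Multiset (V × V)} (h : A ≤ B)
    (X : Finset V) : dIn A X ≤ dIn B X :=
  Multiset.card_le_card (Multiset.filter_le_filter _ h)

lemma dIn_pos {V : Type*} [DecidableEq V] {r : V} {B : Multiset (V × V)}
    (h : ∀ v : V, Relation.ReflTransGen (fun a b : V => (a, b) ∈ B) r v)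
    {X : Finset V} (hx : X.Nonempty) (hr : r ∉ X) : 1 ≤ dIn B X := by
  obtain ⟨v, hv⟩ := hx
  have key : ∀ w : V, Relation.ReflTransGen (fun a b : V => (a, b) ∈ B) r w →
      w ∈ X → 1 ≤ dIn B X := by
    intro w hw
    induction hw with
    | refl => intro h'; exact absurd h' hr
    | @tail b c hb hbc ih =>
      intro hc
      by_cases hbX : b ∈ X
      · exact ih hbX
      · have hmem : (b, c) ∈ B.filter (fun a => a.2 ∈ X ∧ a.1 ∉ X) :=
          Multiset.mem_filter.mpr ⟨hbc, hc, hbX⟩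
        have := Multiset.card_pos_iff_exists_mem.mpr ⟨_, hmem⟩
        exact this
  exact key v (h v) hv

lemma sum_dIn_le_countP {V : Type*} [DecidableEq V] (P : Finset (Finset V))
    (hdisj : (P : Set (Finset V)).Pairwise Disjoint) (O : Multiset (V × V)) :
    ∑ X ∈ P, dIn O X ≤ O.countP (fun p => ∃ X ∈ P, p.2 ∈ X ∧ p.1 ∉ X) := by
  induction O using Multiset.induction with
  | empty => simp [dIn]
  | cons a s ih =>
    simp only [dIn, Multiset.countP_eq_card_filter] at ih ⊢
    simp only [Multiset.filter_cons, apply_ite Multiset.card, Multiset.card_add]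
    rw [Finset.sum_add_distrib]
    have h1 : ∑ X ∈ P, (if a.2 ∈ X ∧ a.1 ∉ X then ({a} : Multiset (V × V)).card else 0)
        ≤ (if (∃ X ∈ P, a.2 ∈ X ∧ a.1 ∉ X) then ({a} : Multiset (V × V)).card else 0) := by
      simp only [Multiset.card_singleton]
      have hcard : (P.filter (fun X => a.2 ∈ X ∧ a.1 ∉ X)).card ≤ 1 := by
        refine Finset.card_le_one.mpr ?_
        intro X hX Y hY
        simp only [Finset.mem_filter] at hX hY
        by_contra hne
        exact (Finset.disjoint_left.mp (hdisj hX.1 hY.1 hne) hX.2.1) hY.2.1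
      rw [← Finset.card_filter]
      by_cases h : ∃ X ∈ P, a.2 ∈ X ∧ a.1 ∉ X
      · simpa [h] using hcard
      · have : P.filter (fun X => a.2 ∈ X ∧ a.1 ∉ X) = ∅ := by
          refine Finset.filter_eq_empty_iff.mpr ?_
          intro X hX hc
          exact h ⟨X, hX, hc⟩
        simp [h, this]
    exact Nat.add_le_add h1 ih

lemma cross_bound {V : Type*} [DecidableEq V] (E : Multiset (Sym2 V))
    (P : Finset (Finset V)) (hdisj : (P : Set (Finset V)).Pairwise Disjoint)
    (O : Multiset (V × V)) (h : O.map (fun p => s(p.1, p.2)) ≤ E) :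
    ∑ X ∈ P, dIn O X ≤ eCross E P := by
  refine le_trans (sum_dIn_le_countP P hdisj _) ?_
  have himp : ∀ p : V × V, (∃ X ∈ P, p.2 ∈ X ∧ p.1 ∉ X) →
      (∃ u v : V, s(p.1, p.2) = s(u, v) ∧ ∃ X ∈ P, u ∈ X ∧ v ∉ X) := by
    rintro p ⟨X, hX, h2, h1⟩
    exact ⟨p.2, p.1, Sym2.eq_swap.symm, X, hX, h2, h1⟩
  calc O.countP (fun p => ∃ X ∈ P, p.2 ∈ X ∧ p.1 ∉ X)
      ≤ O.countP (fun p => ∃ u v : V, s(p.1, p.2) = s(u, v) ∧ ∃ X ∈ P, u ∈ X ∧ v ∉ X) := by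
        simp only [Multiset.countP_eq_card_filter]
        exact Multiset.card_le_card (O.monotone_filter_right himp)
    _ = (O.map (fun p => s(p.1, p.2))).countP
          (fun e => ∃ u v : V, e = s(u, v) ∧ ∃ X ∈ P, u ∈ X ∧ v ∉ X) := by
        rw [Multiset.countP_map, Multiset.countP_eq_card_filter]
    _ ≤ E.countP (fun e => ∃ u v : V, e = s(u, v) ∧ ∃ X ∈ P, u ∈ X ∧ v ∉ X) :=
        Multiset.countP_le_of_le _ h
    _ = eCross E P := by rw [Multiset.countP_eq_card_filter]; rfl

/-- If a mixed graph `F = (V; E, A)` contains `k` edge- and arc-disjoint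
spanning mixed arborescences with roots `r₁, …, r_k` such that each vertex `v`
is a root at most `g(v)` times, then for every subpartition `{X₁, …, X_t}` of
`V`, `e_E({X₁, …, X_t}) + ∑_{j=1}^t d_A^-(X_j) ≥ kt − g̃(∪_j X_j)`. -/
theorem necessity_of_upper_root_bound
    {V : Type*} [Fintype V] [DecidableEq V]
    (E : Multiset (Sym2 V)) (A : Multiset (V × V))
    (k : ℕ) (g : V → ℕ)
    (hpack : ∃ (r : Fin k → V) (EA : Fin k → Multiset (Sym2 V))
        (AA : Fin k → Multiset (V × V)),
        (∑ i, EA i) ≤ E ∧ (∑ i, AA i) ≤ A ∧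
        (∀ i, IsSpanningMixedArborescence (r i) (EA i) (AA i)) ∧
        (∀ v : V, (Finset.univ.filter (fun i => r i = v)).card ≤ g v)) :
    ∀ P : Finset (Finset V), IsSubpartition P →
      (eCross E P : ℤ) + ∑ X ∈ P, (dIn A X : ℤ) ≥
        (k : ℤ) * (P.card : ℤ) - ∑ v ∈ P.sup id, (g v : ℤ) := by
  obtain ⟨r, EA, AA, hE, hA, harb, hroot⟩ := hpack
  intro P hP
  obtain ⟨hne, hdisj⟩ := hP
  choose O hO harbO using harb
  have hOsum : (∑ i, O i).map (fun p => s(p.1, p.2)) = ∑ i, EA i := by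
    rw [show ((∑ i, O i).map (fun p : V × V => s(p.1, p.2)))
        = (Multiset.mapAddMonoidHom (fun p : V × V => s(p.1, p.2))) (∑ i, O i) from rfl,
      map_sum]
    exact Finset.sum_congr rfl (fun i _ => hO i)
  have hcross : ∑ X ∈ P, dIn (∑ i, O i) X ≤ eCross E P :=
    cross_bound E P hdisj _ (hOsum ▸ hE)
  -- root counting
  have hrootcount : ∑ X ∈ P, (Finset.univ.filter (fun i => r i ∈ X)).card
      ≤ ∑ v ∈ P.sup id, g v := by
    have hbi : P.sup id = P.biUnion id := by
      ext v; simp [Finset.mem_sup, Finset.mem_biUnion]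
    have hpd : (P : Set (Finset V)).PairwiseDisjoint id := fun x hx y hy h => hdisj hx hy h
    rw [hbi, Finset.sum_biUnion hpd]
    refine Finset.sum_le_sum ?_
    intro X hX
    have : (Finset.univ.filter (fun i => r i ∈ X)).card
        = ∑ v ∈ X, ((Finset.univ.filter (fun i => r i ∈ X)).filter (fun i => r i = v)).card :=
      Finset.card_eq_sum_card_fiberwise (fun i hi => (Finset.mem_filter.mp hi).2)
    rw [this]
    refine Finset.sum_le_sum ?_
    intro v hv
    refine le_trans ?_ (hroot v)
    refine Finset.card_le_card ?_
    intro i hi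
    simp only [Finset.mem_filter] at hi ⊢
    exact ⟨hi.1.1, hi.2⟩
  -- per-part lower bound
  have hlow : ∀ X ∈ P, k ≤ (Finset.univ.filter (fun i => r i ∈ X)).card
      + ∑ i, dIn (AA i + O i) X := by
    intro X hX
    have hsplit : (Finset.univ.filter (fun i => r i ∈ X)).card
        + (Finset.univ.filter (fun i => ¬ r i ∈ X)).card = k := by
      rw [Finset.card_filter_add_card_filter_not]; simp
    have h2 : (Finset.univ.filter (fun i => ¬ r i ∈ X)).card ≤ ∑ i, dIn (AA i + O i) X := by
      rw [Finset.card_filter]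
      refine Finset.sum_le_sum ?_
      intro i _
      by_cases h : r i ∈ X
      · simp [h]
      · simpa [h] using dIn_pos (harbO i).1 (hne X hX) h
    omega
  -- assemble in ℕ
  have hmain : k * P.card ≤ eCross E P + ∑ X ∈ P, dIn A X + ∑ v ∈ P.sup id, g v := by
    have := Finset.sum_le_sum hlow
    rw [Finset.sum_const, smul_eq_mul, mul_comm] at this
    have hsplit2 : ∑ X ∈ P, ∑ i, dIn (AA i + O i) X
        ≤ ∑ X ∈ P, dIn A X + eCross E P := by
      have : ∀ X ∈ P, ∑ i, dIn (AA i + O i) X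
          = dIn (∑ i, AA i) X + dIn (∑ i, O i) X := by
        intro X _
        rw [dIn_sum, dIn_sum, ← Finset.sum_add_distrib]
        exact Finset.sum_congr rfl (fun i _ => dIn_add _ _ _)
      rw [Finset.sum_congr rfl this, Finset.sum_add_distrib]
      exact Nat.add_le_add (Finset.sum_le_sum fun X _ => dIn_mono hA X) hcross
    calc k * P.card ≤ _ := this
      _ = ∑ X ∈ P, (Finset.univ.filter (fun i => r i ∈ X)).card
          + ∑ X ∈ P, ∑ i, dIn (AA i + O i) X := Finset.sum_add_distrib
      _ ≤ _ := by omega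
  have h' : (k : ℤ) * (P.card : ℤ) ≤ (eCross E P : ℤ) + ∑ X ∈ P, (dIn A X : ℤ)
      + ∑ v ∈ P.sup id, (g v : ℤ) := by exact_mod_cast hmain
  linarith
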